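/- arXiv:1201.4449 — 3 statements merged into one kernel-verified Lean document; each statement's English description precedes it below -/
import Mathlib

section
/- A relation is a successor set simulation from ATS K to ATS K' if and only if it is an alternating simulation from K to K'. Consequently, the maximum successor set simulation equals the maximum alternating simulation relation. -/
/-- A labeled alternating transition system (ATS). -/
structure ATS (Obs W A1 A2 : Type*) where
  init : W
  P1 : W → Set A1
  P2 : W → Set A2
  P1_nonempty : ∀ w, (P1 w).Nonempty
  P2_nonempty : ∀ w, (P2 w).Nonempty
  L : W → Obs
  δ : W → A1 → A2 → W

variable {Obs W A1 A2 W' A1' A2' : Type*}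

/-- `Succ(w,a) = { δ(w,a,b) | b ∈ P2(w) }`. -/
def SuccSet (K : ATS Obs W A1 A2) (w : W) (a : A1) : Set W :=
  (fun b => K.δ w a b) '' K.P2 w

/-- `Succ(K) = { Succ(w,a) | w ∈ W, a ∈ P1(w) }`. -/
def SuccSets (K : ATS Obs W A1 A2) : Set (Set W) :=
  {T | ∃ w, ∃ a ∈ K.P1 w, T = SuccSet K w a}

/-- `S` is an alternating simulation from `K` to `K'`. -/
def IsAltSim (K : ATS Obs W A1 A2) (K' : ATS Obs W' A1' A2')
    (S : W → W' → Prop) : Prop :=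
  ∀ w w', S w w' →
    K.L w = K'.L w' ∧
    ∀ a ∈ K.P1 w, ∃ a' ∈ K'.P1 w', ∀ b' ∈ K'.P2 w', ∃ b ∈ K.P2 w,
      S (K.δ w a b) (K'.δ w' a' b')

/-- `S` is a successor set simulation from `K` to `K'`: there is a companion
relation `Sc ⊆ Succ(K') × Succ(K)` satisfying conditions (i)-(iii). -/
def IsSuccSetSim (K : ATS Obs W A1 A2) (K' : ATS Obs W' A1' A2')
    (S : W → W' → Prop) : Prop :=
  ∃ Sc : Set W' → Set W → Prop,
    (∀ T' T, Sc T' T → T' ∈ SuccSets K' ∧ T ∈ SuccSets K) ∧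
    (∀ w w', S w w' → K.L w = K'.L w') ∧
    (∀ w w', S w w' → ∀ a ∈ K.P1 w, ∃ a' ∈ K'.P1 w',
      Sc (SuccSet K' w' a') (SuccSet K w a)) ∧
    (∀ T' T, Sc T' T → ∀ r' ∈ T', ∃ r ∈ T, S r r')

/-! Conditions (i) and (iii) say nothing about a companion pair `(T', T)` beyond that every
element of `T'` is `S`-matched by an element of `T`. So the companion may be taken to be
the largest relation with this property, and (ii) then unfolds to the alternating step. -/

section

variable (K : ATS Obs W A1 A2) (K' : ATS Obs W' A1' A2') (S : W → W' → Prop)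

theorem forall_mem_succSet_exists_iff (w : W) (a : A1) (w' : W') (a' : A1') :
    (∀ r' ∈ SuccSet K' w' a', ∃ r ∈ SuccSet K w a, S r r') ↔
      ∀ b' ∈ K'.P2 w', ∃ b ∈ K.P2 w, S (K.δ w a b) (K'.δ w' a' b') := by
  simp only [SuccSet, Set.forall_mem_image, Set.exists_mem_image]

def succSetCompanion (T' : Set W') (T : Set W) : Prop :=
  T' ∈ SuccSets K' ∧ T ∈ SuccSets K ∧ ∀ r' ∈ T', ∃ r ∈ T, S r r'

variable {K K' S}

theorem IsSuccSetSim.isAltSim (h : IsSuccSetSim K K' S) : IsAltSim K K' S := by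
  obtain ⟨Sc, -, hL, hstep, hback⟩ := h
  intro w w' hS
  refine ⟨hL w w' hS, fun a ha => ?_⟩
  obtain ⟨a', ha', hSc⟩ := hstep w w' hS a ha
  exact ⟨a', ha', (forall_mem_succSet_exists_iff K K' S w a w' a').1 (hback _ _ hSc)⟩

theorem IsAltSim.isSuccSetSim (h : IsAltSim K K' S) : IsSuccSetSim K K' S := by
  refine ⟨succSetCompanion K K' S, fun _ _ hT => ⟨hT.1, hT.2.1⟩, fun w w' hS => (h w w' hS).1,
    ?_, fun _ _ hT => hT.2.2⟩
  intro w w' hS a ha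
  obtain ⟨a', ha', hmatch⟩ := (h w w' hS).2 a ha
  exact ⟨a', ha', ⟨w', a', ha', rfl⟩, ⟨w, a, ha, rfl⟩,
    (forall_mem_succSet_exists_iff K K' S w a w' a').2 hmatch⟩

variable (K K') in
theorem isSuccSetSim_iff_isAltSim : IsSuccSetSim K K' S ↔ IsAltSim K K' S :=
  ⟨IsSuccSetSim.isAltSim, IsAltSim.isSuccSetSim⟩

end

/-- A relation is a successor set simulation iff it is an alternating
simulation; consequently the maximum successor set simulation equals the
maximum alternating simulation relation. -/
theorem succSetSim_iff_altSim
    (K : ATS Obs W A1 A2) (K' : ATS Obs W' A1' A2') :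
    (∀ S : W → W' → Prop, IsSuccSetSim K K' S ↔ IsAltSim K K' S) ∧
    (∀ M M' : W → W' → Prop,
      (IsSuccSetSim K K' M ∧ ∀ S, IsSuccSetSim K K' S → ∀ w w', S w w' → M w w') →
      (IsAltSim K K' M' ∧ ∀ S, IsAltSim K K' S → ∀ w w', S w w' → M' w w') →
      M = M') := by
  refine ⟨fun S => isSuccSetSim_iff_isAltSim K K', ?_⟩
  rintro M M' ⟨hM, hM_max⟩ hM'
  have hM_greatest : IsGreatest {S | IsAltSim K K' S} M :=
    ⟨hM.isAltSim, fun S hS => hM_max S hS.isSuccSetSim⟩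
  exact hM_greatest.unique hM'
end

section
/- In the reachability-safety game constructed from two ATSs K and K', the set Win2 = { (w,w') | the vertex ⟨w,w'⟩ is winning for player 2 for the safety objective Safe(F) } is an alternating simulation relation from K to K'. -/
variable {Obs W A1 A2 W' A1' A2' : Type*}

/-- Vertices of the game graph for alternating simulation:
`pair w w'` is `⟨w,w'⟩`; `spair T T'` is `⟨T,T'⟩`; `mid T w' t` is
`⟨T,w',#⟩` when `t = false` and `⟨T,w',$⟩` when `t = true`. -/
inductive GVtx (W W' : Type*) where
  | pair : W → W' → GVtx W W'
  | spair : Set W → Set W' → GVtx W W'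
  | mid : Set W → W' → Bool → GVtx W W'

/-- Edges `E = E1 ∪ E2 ∪ E3 ∪ E4` of the game graph. -/
inductive GEdge (K : ATS Obs W A1 A2) (K' : ATS Obs W' A1' A2') :
    GVtx W W' → GVtx W W' → Prop
  | e1 {w : W} {w' : W'} {a : A1} (ha : a ∈ K.P1 w) :
      GEdge K K' (.pair w w') (.mid (SuccSet K w a) w' false)
  | e2 {T : Set W} {w' : W'} {a' : A1'} (hT : T ∈ SuccSets K)
      (ha' : a' ∈ K'.P1 w') :
      GEdge K K' (.mid T w' false) (.spair T (SuccSet K' w' a'))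
  | e3 {T : Set W} {T' : Set W'} {r' : W'} (hT : T ∈ SuccSets K)
      (hT' : T' ∈ SuccSets K') (hr' : r' ∈ T') :
      GEdge K K' (.spair T T') (.mid T r' true)
  | e4 {T : Set W} {r' : W'} {r : W} (hT : T ∈ SuccSets K) (hr : r ∈ T) :
      GEdge K K' (.mid T r' true) (.pair r r')

/-- Player-2 vertices of the game. -/
def isV2 : GVtx W W' → Prop
  | .mid _ _ _ => True
  | _ => False

/-- Player 2 wins the safety objective `Safe(F)` from `v0`, where the unsafe
set is `T = { ⟨w,w'⟩ | L(w) ≠ L'(w') }`: player 2 has a (history-dependent)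
strategy, following edges whenever possible, such that every play from `v0`
consistent with it never visits a vertex `⟨w,w'⟩` with `L(w) ≠ L'(w')`. -/
def Player2WinsSafe (K : ATS Obs W A1 A2) (K' : ATS Obs W' A1' A2')
    (v0 : GVtx W W') : Prop :=
  ∃ σ : List (GVtx W W') → GVtx W W' → GVtx W W',
    (∀ h v, (∃ u, GEdge K K' v u) → GEdge K K' v (σ h v)) ∧
    ∀ f : ℕ → GVtx W W', f 0 = v0 →
      (∀ n, GEdge K K' (f n) (f (n + 1))) →
      (∀ n, isV2 (f n) → f (n + 1) = σ (List.ofFn (fun i : Fin n => f i)) (f n)) →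
      ∀ n w w', f n = .pair w w' → K.L w = K'.L w'

theorem exists_seq_succ_eq_ofFn {α : Type*} (μ : List α → α → α) (a : α) :
    ∃ f : ℕ → α, f 0 = a ∧
      ∀ n, f (n + 1) = μ (List.ofFn fun i : Fin n => f i) (f n) := by
  let g : ℕ → List α × α := fun n =>
    Nat.rec ([], a) (fun _ p => (p.1 ++ [p.2], μ p.1 p.2)) n
  have hist : ∀ n, (g n).1 = List.ofFn fun i : Fin n => (g i).2 := by
    intro n
    induction n with
    | zero => rfl
    | succ n ih =>
      change (g n).1 ++ [(g n).2] = _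
      rw [ih, List.ofFn_succ']
      simp [List.concat_eq_append]
  exact ⟨fun n => (g n).2, rfl, fun n => by rw [← hist]⟩

section Game

variable {K : ATS Obs W A1 A2} {K' : ATS Obs W' A1' A2'}

/-- The paper's vertex set `V`, which unlike `GVtx` only admits sets from `Succ(K)` and
`Succ(K')`; these are nonempty, so no vertex of `V` is a dead end. -/
def IsVertex (K : ATS Obs W A1 A2) (K' : ATS Obs W' A1' A2') : GVtx W W' → Prop
  | .pair _ _ => True
  | .mid T _ _ => T ∈ SuccSets K
  | .spair T T' => T ∈ SuccSets K ∧ T' ∈ SuccSets K'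

theorem succSet_nonempty (K : ATS Obs W A1 A2) (w : W) (a : A1) :
    (SuccSet K w a).Nonempty :=
  (K.P2_nonempty w).image _

theorem nonempty_of_mem_succSets {T : Set W} (hT : T ∈ SuccSets K) : T.Nonempty := by
  obtain ⟨w, a, -, rfl⟩ := hT
  exact succSet_nonempty K w a

theorem isVertex_of_gEdge {v u : GVtx W W'} (h : GEdge K K' v u) : IsVertex K K' u := by
  cases h with
  | e1 ha => exact ⟨_, _, ha, rfl⟩
  | e2 hT ha' => exact ⟨hT, _, _, ha', rfl⟩
  | e3 hT => exact hT
  | e4 => trivial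

theorem IsVertex.exists_gEdge {v : GVtx W W'} (hv : IsVertex K K' v) : ∃ u, GEdge K K' v u := by
  cases v with
  | pair w w' =>
    obtain ⟨a, ha⟩ := K.P1_nonempty w
    exact ⟨_, .e1 ha⟩
  | mid T w' b =>
    cases b with
    | false =>
      obtain ⟨a', ha'⟩ := K'.P1_nonempty w'
      exact ⟨_, .e2 hv ha'⟩
    | true =>
      obtain ⟨r, hr⟩ := nonempty_of_mem_succSets hv
      exact ⟨_, .e4 hv hr⟩
  | spair T T' =>
    obtain ⟨hT, hT'⟩ := hv
    obtain ⟨r', hr'⟩ := nonempty_of_mem_succSets hT'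
    exact ⟨_, .e3 hT hT' hr'⟩

theorem GEdge.exists_eq_spair {T : Set W} {w' : W'} {u : GVtx W W'}
    (h : GEdge K K' (.mid T w' false) u) :
    ∃ a' ∈ K'.P1 w', u = .spair T (SuccSet K' w' a') := by
  cases h with
  | e2 _ ha' => exact ⟨_, ha', rfl⟩

theorem GEdge.exists_eq_pair {T : Set W} {r' : W'} {u : GVtx W W'}
    (h : GEdge K K' (.mid T r' true) u) : ∃ r ∈ T, u = .pair r r' := by
  cases h with
  | e4 _ hr => exact ⟨_, hr, rfl⟩

variable (K K') in
def WinsFrom (σ : List (GVtx W W') → GVtx W W' → GVtx W W') (v0 : GVtx W W') : Prop :=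
  ∀ f : ℕ → GVtx W W', f 0 = v0 →
    (∀ n, GEdge K K' (f n) (f (n + 1))) →
    (∀ n, isV2 (f n) → f (n + 1) = σ (List.ofFn (fun i : Fin n => f i)) (f n)) →
    ∀ n w w', f n = .pair w w' → K.L w = K'.L w'

theorem WinsFrom.cons {σ : List (GVtx W W') → GVtx W W' → GVtx W W'} {v u : GVtx W W'}
    (hwin : WinsFrom K K' σ v) (hvu : GEdge K K' v u) (hcons : isV2 v → u = σ [] v) :
    WinsFrom K K' (fun h => σ (v :: h)) u := by
  intro f hf0 hfe hfc n w w' hn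
  let g : ℕ → GVtx W W' := fun
    | 0 => v
    | n + 1 => f n
  refine hwin g rfl ?_ ?_ (n + 1) w w' hn
  · rintro (_ | n)
    · simpa only [g, hf0] using hvu
    · exact hfe n
  · rintro (_ | n) hv
    · simpa only [g, hf0, List.ofFn_zero] using hcons hv
    · simpa only [g, List.ofFn_succ, Fin.val_zero, Fin.val_succ] using hfc n hv

theorem Player2WinsSafe.label_eq {w : W} {w' : W'} (h : Player2WinsSafe K K' (.pair w w')) :
    K.L w = K'.L w' := by
  obtain ⟨σ, hσ, hwin⟩ := h
  obtain ⟨f, hf0, hfs⟩ := exists_seq_succ_eq_ofFn σ (.pair w w')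
  have hedge : ∀ n, IsVertex K K' (f n) → GEdge K K' (f n) (f (n + 1)) := fun n hv => by
    rw [hfs n]
    exact hσ _ _ hv.exists_gEdge
  have hvertex : ∀ n, IsVertex K K' (f n) := by
    intro n
    induction n with
    | zero => rw [hf0]; trivial
    | succ n ih => exact isVertex_of_gEdge (hedge n ih)
  exact hwin f hf0 (fun n => hedge n (hvertex n)) (fun n _ => hfs n) 0 w w' hf0

theorem Player2WinsSafe.of_gEdge_of_not_isV2 {v u : GVtx W W'} (h : Player2WinsSafe K K' v)
    (hv : ¬ isV2 v) (hvu : GEdge K K' v u) : Player2WinsSafe K K' u :=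
  let ⟨σ, hσ, hwin⟩ := h
  ⟨fun h => σ (v :: h), fun h => hσ (v :: h), WinsFrom.cons hwin hvu (absurd · hv)⟩

theorem Player2WinsSafe.exists_gEdge_player2WinsSafe {v : GVtx W W'} (h : Player2WinsSafe K K' v)
    (hex : ∃ u, GEdge K K' v u) : ∃ u, GEdge K K' v u ∧ Player2WinsSafe K K' u :=
  let ⟨σ, hσ, hwin⟩ := h
  ⟨σ [] v, hσ [] v hex, fun h => σ (v :: h), fun h => hσ (v :: h),
    WinsFrom.cons hwin (hσ [] v hex) fun _ => rfl⟩

end Game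

/-- The set `Win2` of state pairs `(w,w')` such that `⟨w,w'⟩` is winning for
player 2 for the safety objective is an alternating simulation from `K` to `K'`. -/
theorem win2_isAltSim (K : ATS Obs W A1 A2) (K' : ATS Obs W' A1' A2') :
    IsAltSim K K' (fun w w' => Player2WinsSafe K K' (.pair w w')) := by
  intro w w' hwin
  refine ⟨hwin.label_eq, fun a ha => ?_⟩
  have e1 : GEdge K K' (.pair w w') (.mid (SuccSet K w a) w' false) := .e1 ha
  obtain ⟨_, e2, hwin⟩ := (hwin.of_gEdge_of_not_isV2 id e1).exists_gEdge_player2WinsSafe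
    (isVertex_of_gEdge e1).exists_gEdge
  obtain ⟨a', ha', rfl⟩ := e2.exists_eq_spair
  refine ⟨a', ha', fun b' hb' => ?_⟩
  have e3 : GEdge K K' _ (.mid (SuccSet K w a) (K'.δ w' a' b') true) :=
    .e3 ⟨w, a, ha, rfl⟩ ⟨w', a', ha', rfl⟩ ⟨b', hb', rfl⟩
  obtain ⟨_, e4, hwin⟩ := (hwin.of_gEdge_of_not_isV2 id e3).exists_gEdge_player2WinsSafe
    (isVertex_of_gEdge e3).exists_gEdge
  obtain ⟨_, ⟨b, hb, rfl⟩, rfl⟩ := e4.exists_eq_pair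
  exact ⟨b, hb, hwin⟩
end

section
/- Consider the parity game constructed for fair alternating simulation. If a play starting from ⟨w,w'⟩ satisfies the three-priority parity objective for player 2, then the corresponding runs w̄ = w0,w1,w2,… in K and w̄' = w0',w1',w2',… in K' satisfy: if w̄ is fair (visits F infinitely often) then w̄' is fair (visits F' infinitely often), and L(w_i) = L'(w_i') for all i ≥ 0. -/
variable {Obs W A1 A2 W' A1' A2' : Type*}

/-- Vertices of the parity game for fair alternating simulation:
`pair w w'` is `⟨w,w'⟩` (only used with `L(w) = L'(w')`); `spair T T'` is
`⟨T,T'⟩`; `mid T w' t` is `⟨T,w',#⟩` for `t = false` and `⟨T,w',$⟩` for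
`t = true`; `frown` is the absorbing sink `⌢`. -/
inductive FVtx (W W' : Type*) where
  | pair : W → W' → FVtx W W'
  | spair : Set W → Set W' → FVtx W W'
  | mid : Set W → W' → Bool → FVtx W W'
  | frown : FVtx W W'

/-- Edges `E = E1 ∪ E2 ∪ E3 ∪ E4¹ ∪ E4² ∪ E5` of the parity game. -/
inductive FEdge (K : ATS Obs W A1 A2) (K' : ATS Obs W' A1' A2') :
    FVtx W W' → FVtx W W' → Prop
  | e1 {w : W} {w' : W'} {a : A1} (hL : K.L w = K'.L w') (ha : a ∈ K.P1 w) :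
      FEdge K K' (.pair w w') (.mid (SuccSet K w a) w' false)
  | e2 {T : Set W} {w' : W'} {a' : A1'} (hT : T ∈ SuccSets K)
      (ha' : a' ∈ K'.P1 w') :
      FEdge K K' (.mid T w' false) (.spair T (SuccSet K' w' a'))
  | e3 {T : Set W} {T' : Set W'} {r' : W'} (hT : T ∈ SuccSets K)
      (hT' : T' ∈ SuccSets K') (hr' : r' ∈ T') :
      FEdge K K' (.spair T T') (.mid T r' true)
  | e4a {T : Set W} {r' : W'} {r : W} (hT : T ∈ SuccSets K) (hr : r ∈ T)
      (hL : K.L r = K'.L r') :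
      FEdge K K' (.mid T r' true) (.pair r r')
  | e4b {T : Set W} {r' : W'} (hT : T ∈ SuccSets K)
      (hno : ∀ r ∈ T, K.L r ≠ K'.L r') :
      FEdge K K' (.mid T r' true) .frown
  | e5 : FEdge K K' .frown .frown

open Classical in
/-- The three-priority priority function: priority `0` on `(W × F') ∩ V1`,
priority `1` on `((F × W' \ W × F') ∩ V1) ∪ {⌢}`, priority `2` elsewhere. -/
noncomputable def prio (F : Set W) (F' : Set W') : FVtx W W' → ℕ
  | .pair w w' => if w' ∈ F' then 0 else if w ∈ F then 1 else 2
  | .frown => 1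
  | _ => 2

/-- Vertices occurring infinitely often in the play `f`. -/
def InfinitelyOften {α : Type*} (f : ℕ → α) : Set α :=
  {v | ∀ N, ∃ n ≥ N, f n = v}

/-- The parity objective for priority function `p`: the minimum priority
visited infinitely often is even. -/
def ParitySat {α : Type*} (p : α → ℕ) (f : ℕ → α) : Prop :=
  (InfinitelyOften f ∩ p ⁻¹' {0}).Nonempty ∨ InfinitelyOften f ∩ p ⁻¹' {1} = ∅

/-- A run is fair iff it visits the fairness set infinitely often. -/
def FairRun {X : Type*} (F : Set X) (ρ : ℕ → X) : Prop :=
  ∀ N, ∃ n ≥ N, ρ n ∈ F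

/-- The play `⟨w₀,w₀'⟩, ⟨T₀,w₀',#⟩, ⟨T₀,T₀'⟩, ⟨T₀,w₁',$⟩, ⟨w₁,w₁'⟩, …`
determined by the runs `w̄`, `w̄'` and the successor-set sequences. -/
def playOf (wseq : ℕ → W) (w'seq : ℕ → W') (Tseq : ℕ → Set W)
    (T'seq : ℕ → Set W') : ℕ → FVtx W W' := fun n =>
  match n % 4 with
  | 0 => .pair (wseq (n / 4)) (w'seq (n / 4))
  | 1 => .mid (Tseq (n / 4)) (w'seq (n / 4)) false
  | 2 => .spair (Tseq (n / 4)) (T'seq (n / 4))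
  | _ => .mid (Tseq (n / 4)) (w'seq (n / 4 + 1)) true

open Filter

theorem mem_infinitelyOften_iff_frequently {α : Type*} {f : ℕ → α} {a : α} :
    a ∈ InfinitelyOften f ↔ ∃ᶠ n in atTop, f n = a :=
  frequently_atTop.symm

theorem fairRun_iff_frequently {X : Type*} {F : Set X} {ρ : ℕ → X} :
    FairRun F ρ ↔ ∃ᶠ n in atTop, ρ n ∈ F :=
  frequently_atTop.symm

theorem exists_mem_infinitelyOften_of_frequently {α : Type*} [Finite α] {f : ℕ → α} {S : Set α}
    (h : ∃ᶠ n in atTop, f n ∈ S) : ∃ a ∈ S, a ∈ InfinitelyOften f := by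
  have h' : ∃ᶠ n in atTop, ∃ a, a ∈ S ∧ f n = a := h.mono fun n hn => ⟨f n, hn, rfl⟩
  obtain ⟨a, ha⟩ := frequently_exists.1 h'
  obtain ⟨haS, hfa⟩ := frequently_and_distrib_left.1 ha
  exact ⟨a, haS, mem_infinitelyOften_iff_frequently.2 hfa⟩

theorem FEdge.label_eq_of_pair {K : ATS Obs W A1 A2} {K' : ATS Obs W' A1' A2'} {w : W} {w' : W'}
    {v : FVtx W W'} (h : FEdge K K' (.pair w w') v) : K.L w = K'.L w' := by
  cases h
  assumption

theorem prio_eq_zero {F : Set W} {F' : Set W'} {v : FVtx W W'} (h : prio F F' v = 0) :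
    ∃ w w', v = .pair w w' ∧ w' ∈ F' := by
  cases v with
  | pair w w' =>
    refine ⟨w, w', rfl, ?_⟩
    by_contra hw'
    simp only [prio, hw', if_false] at h
    split_ifs at h
  | _ => simp [prio] at h

theorem prio_pair_of_mem_of_notMem {F : Set W} {F' : Set W'} {w : W} {w' : W'} (hw : w ∈ F)
    (hw' : w' ∉ F') : prio F F' (.pair w w') = 1 := by
  simp [prio, hw, hw']

section playOf

variable {wseq : ℕ → W} {w'seq : ℕ → W'} {Tseq : ℕ → Set W} {T'seq : ℕ → Set W'}

theorem playOf_four_mul (i : ℕ) :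
    playOf wseq w'seq Tseq T'seq (4 * i) = .pair (wseq i) (w'seq i) := by
  simp [playOf, Nat.mul_mod_right]

theorem playOf_eq_pair_iff {n : ℕ} {w : W} {w' : W'} :
    playOf wseq w'seq Tseq T'seq n = .pair w w' ↔
      n % 4 = 0 ∧ wseq (n / 4) = w ∧ w'seq (n / 4) = w' := by
  have := Nat.mod_lt n four_pos
  interval_cases h : n % 4 <;> simp [playOf, h]

theorem pair_mem_infinitelyOften_playOf_iff {w : W} {w' : W'} :
    FVtx.pair w w' ∈ InfinitelyOften (playOf wseq w'seq Tseq T'seq) ↔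
      (w, w') ∈ InfinitelyOften fun i => (wseq i, w'seq i) := by
  constructor
  · intro h N
    obtain ⟨n, hn, hpair⟩ := h (4 * N)
    obtain ⟨-, hw, hw'⟩ := playOf_eq_pair_iff.1 hpair
    exact ⟨n / 4, by omega, Prod.ext hw hw'⟩
  · intro h N
    obtain ⟨i, hi, hpair⟩ := h N
    obtain ⟨hw, hw'⟩ := Prod.mk.inj hpair
    exact ⟨4 * i, by omega, by rw [playOf_four_mul, hw, hw']⟩

end playOf

/-- If a play of the fair-alternating-simulation parity game satisfies the
parity objective for player 2, then the corresponding runs `w̄` in `K` and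
`w̄'` in `K'` satisfy: if `w̄` is fair then `w̄'` is fair, and
`L(wᵢ) = L'(wᵢ')` for all `i`. -/
theorem parity_play_correspondence
    [Fintype W] [Fintype W']
    (K : ATS Obs W A1 A2) (K' : ATS Obs W' A1' A2')
    (F : Set W) (F' : Set W')
    (wseq : ℕ → W) (w'seq : ℕ → W') (Tseq : ℕ → Set W) (T'seq : ℕ → Set W')
    (hplay : ∀ n, FEdge K K' (playOf wseq w'seq Tseq T'seq n)
      (playOf wseq w'seq Tseq T'seq (n + 1)))
    (hpar : ParitySat (prio F F') (playOf wseq w'seq Tseq T'seq)) :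
    (FairRun F wseq → FairRun F' w'seq) ∧
    ∀ i, K.L (wseq i) = K'.L (w'seq i) := by
  have hlabel : ∀ i, K.L (wseq i) = K'.L (w'seq i) := fun i =>
    (playOf_four_mul (Tseq := Tseq) (T'seq := T'seq) i ▸ hplay (4 * i)).label_eq_of_pair
  refine ⟨fun hfair => ?_, hlabel⟩
  rcases hpar with ⟨v, hv, hv0⟩ | hno1
  · obtain ⟨w, w', rfl, hw'⟩ := prio_eq_zero hv0
    have hrec := mem_infinitelyOften_iff_frequently.1 (pair_mem_infinitelyOften_playOf_iff.1 hv)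
    exact fairRun_iff_frequently.2 (hrec.mono fun i hi => (Prod.mk.inj hi).2 ▸ hw')
  · by_contra hunfair
    have hbad : ∃ᶠ i in atTop, (wseq i, w'seq i) ∈ F ×ˢ F'ᶜ :=
      (fairRun_iff_frequently.1 hfair).and_eventually
        (not_frequently.1 (mt fairRun_iff_frequently.2 hunfair))
    obtain ⟨⟨w, w'⟩, ⟨hw, hw'⟩, hrec⟩ := exists_mem_infinitelyOften_of_frequently hbad
    exact hno1.subset
      ⟨pair_mem_infinitelyOften_playOf_iff.2 hrec, prio_pair_of_mem_of_notMem hw hw'⟩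
end
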